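/- arXiv:2407.14120 — 2 statements merged into one kernel-verified Lean document; each statement's English description precedes it below -/
import Mathlib

section
/- In the Soccer Ball Graph, the set of ten hexagonal vertices {H(2,j) | 1 ≤ j ≤ 5} ∪ {H(5,j) | 1 ≤ j ≤ 5} is an Identifying Code Set; hence the minimum cardinality of an ICS for the SBG is at most 10. -/
/-- Vertices of the Soccer Ball Graph: 12 pentagonal vertices
(`P1`, `P3 j`, `P4 j`, `P6`) and 20 hexagonal vertices
(`H2 j`, `H3 j`, `H4 j`, `H5 j`), indices `j : Fin 5` taken cyclically. -/
inductive SBGVertex : Type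
  | P1 : SBGVertex
  | P3 : Fin 5 → SBGVertex
  | P4 : Fin 5 → SBGVertex
  | P6 : SBGVertex
  | H2 : Fin 5 → SBGVertex
  | H3 : Fin 5 → SBGVertex
  | H4 : Fin 5 → SBGVertex
  | H5 : Fin 5 → SBGVertex
  deriving DecidableEq, Fintype

open SBGVertex

/-- One direction of each of the 17 edge families E1–E17 (indices mod 5). -/
def sbgRel : SBGVertex → SBGVertex → Bool
  | P1, H2 _ => true                                -- E1
  | P6, H5 _ => true                                -- E2
  | H2 j, H2 k => k == j + 1                        -- E3 (i = 2)
  | H5 j, H5 k => k == j + 1                        -- E3 (i = 5)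
  | H3 j, P3 k => k == j                            -- E4
  | P3 j, H3 k => k == j + 1                        -- E5
  | H4 j, P4 k => k == j + 1                        -- E6
  | P4 j, H4 k => k == j                            -- E7
  | H2 j, H3 k => k == j                            -- E8
  | H2 j, P3 k => k == j - 1 || k == j              -- E9, E10
  | H3 j, P4 k => k == j                            -- E11
  | H3 j, H4 k => k == j - 1 || k == j              -- E12, E13
  | P3 j, H4 k => k == j                            -- E14
  | H4 j, H5 k => k == j                            -- E15
  | P4 j, H5 k => k == j - 1 || k == j              -- E16, E17
  | _, _ => false

/-- The Soccer Ball Graph. -/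
def SBG : SimpleGraph SBGVertex where
  Adj v w := v ≠ w ∧ (sbgRel v w || sbgRel w v)
  symm := by
    constructor
    intro v w h
    exact ⟨h.1.symm, by have := h.2; rwa [Bool.or_comm]⟩
  loopless := by constructor; intro v h; exact h.1 rfl

instance : DecidableRel SBG.Adj := fun v w =>
  inferInstanceAs (Decidable (v ≠ w ∧ (sbgRel v w || sbgRel w v) = true))

/-- Closed neighborhood `N⁺(v)` of a vertex of the SBG. -/
def closedNbhd (v : SBGVertex) : Finset SBGVertex :=
  Finset.univ.filter fun u => u = v ∨ SBG.Adj v u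

/-- `V'` is an Identifying Code Set of the SBG. -/
def IsICS (V' : Finset SBGVertex) : Prop :=
  ∀ v w : SBGVertex, v ≠ w → closedNbhd v ∩ V' ≠ closedNbhd w ∩ V'

/-! The code sees every vertex in a run of cyclically consecutive vertices of layer 2 or 5:
the whole layer from `P1` and `P6`, three from `H2 j` and `H5 j`, two from `P3 j` and `P4 j`,
one from `H3 j` and `H4 j`. The size and the layer of the run identify the kind of the vertex,
and its position on the 5-cycle identifies the index. -/

open Finset

def hexLayerCode : Finset SBGVertex :=
  univ.image H2 ∪ univ.image H5

def hexLayerTrace : SBGVertex → Finset SBGVertex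
  | P1 => univ.image H2
  | P6 => univ.image H5
  | H2 j => {H2 (j - 1), H2 j, H2 (j + 1)}
  | H5 j => {H5 (j - 1), H5 j, H5 (j + 1)}
  | P3 j => {H2 j, H2 (j + 1)}
  | P4 j => {H5 (j - 1), H5 j}
  | H3 j => {H2 j}
  | H4 j => {H5 j}

theorem isICS_iff_injective {V' : Finset SBGVertex} :
    IsICS V' ↔ Function.Injective fun v => closedNbhd v ∩ V' :=
  forall₂_congr fun _ _ => not_imp_not

theorem closedNbhd_inter_hexLayerCode (v : SBGVertex) :
    closedNbhd v ∩ hexLayerCode = hexLayerTrace v := by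
  revert v; decide

theorem hexLayerTrace_injective : Function.Injective hexLayerTrace := by
  unfold Function.Injective; decide

theorem isICS_hexLayerCode : IsICS hexLayerCode := by
  rw [isICS_iff_injective]
  simpa only [closedNbhd_inter_hexLayerCode] using hexLayerTrace_injective

theorem card_hexLayerCode : hexLayerCode.card = 10 := by
  rw [hexLayerCode, card_union_of_disjoint, card_image_of_injective _ fun _ _ => H2.inj,
    card_image_of_injective _ fun _ _ => H5.inj]
  · simp
  · simp [disjoint_left]

/-- The ten hexagonal vertices of layers 2 and 5 form an Identifying Code Set
of the SBG; hence the minimum cardinality of an ICS of the SBG is at most 10. -/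
theorem sbg_ics_of_card_ten :
    IsICS ((Finset.univ.image H2) ∪ (Finset.univ.image H5)) ∧
    ∃ V' : Finset SBGVertex, IsICS V' ∧ V'.card ≤ 10 :=
  ⟨isICS_hexLayerCode, hexLayerCode, isICS_hexLayerCode, card_hexLayerCode.le⟩
end

section
/- In the Soccer Ball Graph, no set of three vertices from the top half (layers L1–L3) can distinguish all six vertices of layers L1 ∪ L2; i.e., for every V' ⊆ L1 ∪ L2 ∪ L3 with |V'| = 3, there exist distinct vertices u, v ∈ L1 ∪ L2 with N⁺(u) ∩ V' = N⁺(v) ∩ V'. -/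
open SBGVertex

/-- Membership in the top half (layers L1–L3) of the SBG. -/
def inTopHalf : SBGVertex → Bool
  | P1 => true | H2 _ => true | H3 _ => true | P3 _ => true
  | _ => false

/-- The top half L1 ∪ L2 ∪ L3 of the SBG. -/
def topHalf : Finset SBGVertex := Finset.univ.filter fun v => inTopHalf v

/-- The bottom half L4 ∪ L5 ∪ L6 of the SBG. -/
def bottomHalf : Finset SBGVertex := Finset.univ.filter fun v => ¬ inTopHalf v

/-- Membership in layers L1 ∪ L2. -/
def inL12 : SBGVertex → Bool
  | P1 => true | H2 _ => true
  | _ => false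

/-- Layers L1 ∪ L2 of the SBG. -/
def L12 : Finset SBGVertex := Finset.univ.filter fun v => inL12 v

/-! The trace of `N⁺(u)` on `{a, b, c}` only records which of `a`, `b`, `c` lie in `N⁺(u)`, so
the claim reduces to a finite statement about the 16³ triples of top-half vertices and the pairs of
`L12`, which the kernel decides by evaluating the adjacency relation. -/

theorem Finset.inter_eq_inter_iff_forall_mem {α : Type*} [DecidableEq α] {s t u : Finset α} :
    s ∩ u = t ∩ u ↔ ∀ x ∈ u, (x ∈ s ↔ x ∈ t) := by
  simp only [Finset.ext_iff, Finset.mem_inter]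
  exact ⟨fun h x hx => by simpa [hx] using h x, fun h x => by by_cases hx : x ∈ u <;> simp [hx, h]⟩

lemma mem_closedNbhd {u x : SBGVertex} : x ∈ closedNbhd u ↔ x = u ∨ SBG.Adj u x := by
  simp [closedNbhd]

lemma exists_L12_pair_indistinguishable_by_top_triple :
    ∀ a ∈ topHalf, ∀ b ∈ topHalf, ∀ c ∈ topHalf, ∃ u ∈ L12, ∃ v ∈ L12, u ≠ v ∧
      ∀ x ∈ ({a, b, c} : Finset SBGVertex), (x ∈ closedNbhd u ↔ x ∈ closedNbhd v) := by
  simp only [Finset.forall_mem_insert, Finset.mem_singleton, forall_eq, mem_closedNbhd]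
  decide +kernel

/-- No set of three vertices from the top half (layers L1–L3) of the SBG can
distinguish all six vertices of L1 ∪ L2: for every such set of size 3, two
distinct vertices of L1 ∪ L2 get the same signature. -/
theorem sbg_three_insufficient_for_top (V' : Finset SBGVertex)
    (hsub : V' ⊆ topHalf) (hcard : V'.card = 3) :
    ∃ u ∈ L12, ∃ v ∈ L12, u ≠ v ∧ closedNbhd u ∩ V' = closedNbhd v ∩ V' := by
  obtain ⟨a, b, c, -, -, -, rfl⟩ := Finset.card_eq_three.mp hcard
  simp only [Finset.insert_subset_iff, Finset.singleton_subset_iff] at hsub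
  obtain ⟨u, hu, v, hv, huv, hagree⟩ :=
    exists_L12_pair_indistinguishable_by_top_triple a hsub.1 b hsub.2.1 c hsub.2.2
  exact ⟨u, hu, v, hv, huv, Finset.inter_eq_inter_iff_forall_mem.mpr hagree⟩
end
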